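/- arXiv:1611.04551 — 3 statements merged into one kernel-verified Lean document; each statement's English description precedes it below -/
import Mathlib

section
/- Let T_Ising = diag(1, e^{πi/8}, −1) and T_{SU(2)₂} = diag(1, e^{3πi/8}, −1) as 3×3 complex matrices. For every integer a ≥ 0, setting m = 4a + 2: if 2a+1 ≡ 1 (mod 8) or 2a+1 ≡ 7 (mod 8), then |Tr(T_Ising^m)| = √(5 + 2√2); and if 2a+1 ≡ 3 (mod 8) or 2a+1 ≡ 5 (mod 8), then |Tr(T_Ising^m)| = √(5 − 2√2). -/
/-!
The twist `θ = exp (π i / 8)` squares to the primitive eighth root of unity `ζ = exp (π i / 4)`,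
so for `m = 2 (2a + 1)` we get `Tr (T^m) = 1 + ζ^(2a+1) + 1 = 2 + ζ^k` with `k = (2a + 1) mod 8`.
Then `|2 + ζ^k|² = 5 + 4 cos (k π / 4)`, and `cos (k π / 4) = ± √2 / 2` for odd `k`,
with sign `+` for `k = 1, 7` and `-` for `k = 3, 5`.
-/

open Matrix Complex

noncomputable def TIsing : Matrix (Fin 3) (Fin 3) ℂ :=
  Matrix.diagonal ![1, Complex.exp (Real.pi * Complex.I / 8), -1]

lemma norm_ofReal_add_exp_mul_I (r x : ℝ) :
    ‖(r : ℂ) + exp (x * I)‖ = Real.sqrt (r ^ 2 + 2 * r * Real.cos x + 1) := by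
  have hsplit : (r : ℂ) + exp (x * I) = ((r + Real.cos x : ℝ) : ℂ) + (Real.sin x : ℝ) * I := by
    rw [exp_mul_I]
    push_cast
    ring
  rw [hsplit, norm_add_mul_I]
  congr 1
  linear_combination Real.sin_sq_add_cos_sq x

lemma trace_TIsing_pow (n : ℕ) :
    trace (TIsing ^ n) = 1 + exp (Real.pi * I / 8) ^ n + (-1) ^ n := by
  simp [TIsing, diagonal_pow, trace_diagonal, Fin.sum_univ_three]

lemma exp_pi_mul_I_div_eight_pow_two_mul (k : ℕ) :
    exp (Real.pi * I / 8) ^ (2 * k) = exp (((k % 8 : ℕ) * (Real.pi / 4) : ℝ) * I) := by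
  have hsq : exp (Real.pi * I / 8) ^ 2 = exp (Real.pi * I / 4) := by
    rw [← exp_nat_mul]
    ring_nf
  have horder : exp (Real.pi * I / 4) ^ 8 = 1 := by
    rw [← exp_nat_mul, ← exp_two_pi_mul_I]
    ring_nf
  rw [pow_mul, hsq, pow_eq_pow_mod k horder, ← exp_nat_mul]
  push_cast
  ring_nf

lemma norm_trace_TIsing_pow_four_mul_add_two (a : ℕ) :
    ‖trace (TIsing ^ (4 * a + 2))‖
      = Real.sqrt (5 + 4 * Real.cos (((2 * a + 1) % 8 : ℕ) * (Real.pi / 4))) := by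
  have htrace : trace (TIsing ^ (4 * a + 2))
      = ((2 : ℝ) : ℂ) + exp (((((2 * a + 1) % 8 : ℕ)) * (Real.pi / 4) : ℝ) * I) := by
    rw [trace_TIsing_pow, show 4 * a + 2 = 2 * (2 * a + 1) by ring,
      exp_pi_mul_I_div_eight_pow_two_mul, (even_two_mul _).neg_one_pow]
    push_cast
    ring
  rw [htrace, norm_ofReal_add_exp_mul_I]
  ring_nf

theorem abs_trace_TIsing_pow (a : ℕ) (m : ℕ) (hm : m = 4 * a + 2) :
    (((2 * a + 1) % 8 = 1 ∨ (2 * a + 1) % 8 = 7) →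
      ‖Matrix.trace (TIsing ^ m)‖ = Real.sqrt (5 + 2 * Real.sqrt 2)) ∧
    (((2 * a + 1) % 8 = 3 ∨ (2 * a + 1) % 8 = 5) →
      ‖Matrix.trace (TIsing ^ m)‖ = Real.sqrt (5 - 2 * Real.sqrt 2)) := by
  subst hm
  rw [norm_trace_TIsing_pow_four_mul_add_two]
  have hcos := Real.cos_pi_div_four
  refine ⟨fun h => ?_, fun h => ?_⟩ <;> rcases h with h | h <;> rw [h] <;> congr 1
  · rw [Nat.cast_one, one_mul, hcos]; ring
  · rw [show ((7 : ℕ) : ℝ) * (Real.pi / 4) = 2 * Real.pi - Real.pi / 4 by push_cast; ring,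
      Real.cos_two_pi_sub, hcos]; ring
  · rw [show ((3 : ℕ) : ℝ) * (Real.pi / 4) = Real.pi - Real.pi / 4 by push_cast; ring,
      Real.cos_pi_sub, hcos]; ring
  · rw [show ((5 : ℕ) : ℝ) * (Real.pi / 4) = Real.pi / 4 + Real.pi by push_cast; ring,
      Real.cos_add_pi, hcos]; ring
end

section
/- Let m₁, m₂, m₃, n₁, n₂, n₃ be non-negative integers with m₁ + m₂ + m₃ = n₁ + n₂ + n₃ = s, and set pᵢ = s − mᵢ − nᵢ ∈ ℤ for i = 1, 2, 3. Then there exists an admissible 6-tuple for (m₁, n₁, m₂, n₂, m₃, n₃) — that is, non-negative integers (x, y, a, b, u, v) with x + v = m₁, y + u = n₁, a + y = m₂, x + b = n₂, b + u = m₃, a + v = n₃ — if and only if p₁ ≥ 0, p₂ ≥ 0, and p₃ ≥ 0. -/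
/-!
Each `pᵢ` is a sum of two entries of an admissible tuple (`p₁ = a + b`, `p₂ = u + v`,
`p₃ = x + y`), which gives necessity. Conversely, an admissible tuple is determined by its
entry `x`, and the six non-negativity constraints confine `x` to an interval whose lower ends
`0, m₁ - n₃, n₂ - m₃` lie below its upper ends `m₁, n₂, n₁ + n₂ - m₃` exactly when
`p₁, p₂, p₃ ≥ 0`.
-/

structure AdmissibleTuple (m₁ n₁ m₂ n₂ m₃ n₃ : ℕ) where
  x : ℕ
  y : ℕ
  a : ℕ
  b : ℕ
  u : ℕ
  v : ℕ
  x_add_v : x + v = m₁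
  y_add_u : y + u = n₁
  a_add_y : a + y = m₂
  x_add_b : x + b = n₂
  b_add_u : b + u = m₃
  a_add_v : a + v = n₃

namespace AdmissibleTuple

variable {m₁ n₁ m₂ n₂ m₃ n₃ : ℕ}

theorem m₂_add_m₃ (t : AdmissibleTuple m₁ n₁ m₂ n₂ m₃ n₃) : m₂ + m₃ = n₁ + (t.a + t.b) := by
  have := t.y_add_u; have := t.a_add_y; have := t.b_add_u; omega

theorem m₁_add_m₃ (t : AdmissibleTuple m₁ n₁ m₂ n₂ m₃ n₃) : m₁ + m₃ = n₂ + (t.u + t.v) := by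
  have := t.x_add_v; have := t.x_add_b; have := t.b_add_u; omega

theorem m₁_add_m₂ (t : AdmissibleTuple m₁ n₁ m₂ n₂ m₃ n₃) : m₁ + m₂ = n₃ + (t.x + t.y) := by
  have := t.x_add_v; have := t.a_add_y; have := t.a_add_v; omega

/-- The admissible tuple with prescribed entry `x`; the bounds on `x` say that the other five
entries, solved for in terms of `x`, are non-negative. -/
def ofX (hs : m₁ + m₂ + m₃ = n₁ + n₂ + n₃) (x : ℕ) (hm₁ : m₁ ≤ n₃ + x) (hn₂ : n₂ ≤ m₃ + x)
    (hx_m₁ : x ≤ m₁) (hx_n₂ : x ≤ n₂) (hx : m₃ + x ≤ n₁ + n₂) :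
    AdmissibleTuple m₁ n₁ m₂ n₂ m₃ n₃ where
  x := x
  y := n₁ + n₂ - m₃ - x
  a := n₃ + x - m₁
  b := n₂ - x
  u := m₃ + x - n₂
  v := m₁ - x
  x_add_v := by omega
  y_add_u := by omega
  a_add_y := by omega
  x_add_b := by omega
  b_add_u := by omega
  a_add_v := by omega

theorem nonempty_iff (hs : m₁ + m₂ + m₃ = n₁ + n₂ + n₃) :
    Nonempty (AdmissibleTuple m₁ n₁ m₂ n₂ m₃ n₃) ↔
      n₁ ≤ m₂ + m₃ ∧ n₂ ≤ m₁ + m₃ ∧ n₃ ≤ m₁ + m₂ := by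
  constructor
  · rintro ⟨t⟩
    exact ⟨by rw [t.m₂_add_m₃]; omega, by rw [t.m₁_add_m₃]; omega, by rw [t.m₁_add_m₂]; omega⟩
  · rintro ⟨h₁, h₂, h₃⟩
    exact ⟨ofX hs (max (m₁ - n₃) (n₂ - m₃)) (by omega) (by omega) (by omega) (by omega)
      (by omega)⟩

end AdmissibleTuple

theorem admissible_tuple_exists_iff
    (m₁ m₂ m₃ n₁ n₂ n₃ s : ℕ)
    (hm : m₁ + m₂ + m₃ = s) (hn : n₁ + n₂ + n₃ = s)
    (p₁ p₂ p₃ : ℤ)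
    (hp₁ : p₁ = (s : ℤ) - m₁ - n₁) (hp₂ : p₂ = (s : ℤ) - m₂ - n₂)
    (hp₃ : p₃ = (s : ℤ) - m₃ - n₃) :
    (∃ x y a b u v : ℕ,
      x + v = m₁ ∧ y + u = n₁ ∧ a + y = m₂ ∧ x + b = n₂ ∧ b + u = m₃ ∧ a + v = n₃)
      ↔ (0 ≤ p₁ ∧ 0 ≤ p₂ ∧ 0 ≤ p₃) := by
  have exists_iff_nonempty : (∃ x y a b u v : ℕ,
      x + v = m₁ ∧ y + u = n₁ ∧ a + y = m₂ ∧ x + b = n₂ ∧ b + u = m₃ ∧ a + v = n₃) ↔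
      Nonempty (AdmissibleTuple m₁ n₁ m₂ n₂ m₃ n₃) :=
    ⟨fun ⟨x, y, a, b, u, v, h₁, h₂, h₃, h₄, h₅, h₆⟩ => ⟨⟨x, y, a, b, u, v, h₁, h₂, h₃, h₄, h₅, h₆⟩⟩,
      fun ⟨t⟩ => ⟨t.x, t.y, t.a, t.b, t.u, t.v, t.x_add_v, t.y_add_u, t.a_add_y, t.x_add_b,
        t.b_add_u, t.a_add_v⟩⟩
  rw [exists_iff_nonempty, AdmissibleTuple.nonempty_iff (hm.trans hn.symm)]
  omega
end

section
/- Let m₁, m₂, m₃, n₁, n₂, n₃ be non-negative integers with m₁ + m₂ + m₃ = n₁ + n₂ + n₃ = s, set pᵢ = s − mᵢ − nᵢ for i = 1, 2, 3, and assume p₁ ≥ 0, p₂ ≥ 0, p₃ ≥ 0. Then the number of admissible 6-tuples for (m₁, n₁, m₂, n₂, m₃, n₃) — tuples of non-negative integers (x, y, a, b, u, v) with x + v = m₁, y + u = n₁, a + y = m₂, x + b = n₂, b + u = m₃, a + v = n₃ — is exactly min(m₁, m₂, m₃, n₁, n₂, n₃, p₁, p₂, p₃) + 1. -/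
/-!
An admissible tuple is determined by `x`: the equations give `v = m₁ - x`, `b = n₂ - x`,
`u = m₃ - n₂ + x`, `a = n₃ - m₁ + x`, `y = m₁ + m₂ - n₃ - x`, and then `y + u = n₁` holds
automatically because `∑ mᵢ = ∑ nᵢ`. Non-negativity confines `x` to the interval from
`max (0, n₂ - m₃, m₁ - n₃)` to `min (m₁, n₂, m₁ + m₂ - n₃)`, and the nine differences
"upper bound minus lower bound" are exactly `m₁, m₂, m₃, n₁, n₂, n₃, p₁, p₂, p₃`.
-/

abbrev AdmissibleTuple_s10 (m₁ n₁ m₂ n₂ m₃ n₃ : ℕ) : Type :=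
  {t : ℕ × ℕ × ℕ × ℕ × ℕ × ℕ //
    t.1 + t.2.2.2.2.2 = m₁ ∧ t.2.1 + t.2.2.2.2.1 = n₁ ∧
    t.2.2.1 + t.2.1 = m₂ ∧ t.1 + t.2.2.2.1 = n₂ ∧
    t.2.2.2.1 + t.2.2.2.2.1 = m₃ ∧ t.2.2.1 + t.2.2.2.2.2 = n₃}

namespace AdmissibleTuple_s10

variable {m₁ n₁ m₂ n₂ m₃ n₃ : ℕ}

def equivIcc (hs : m₁ + m₂ + m₃ = n₁ + n₂ + n₃) (h₃ : n₃ ≤ m₁ + m₂) :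
    AdmissibleTuple_s10 m₁ n₁ m₂ n₂ m₃ n₃ ≃
      Set.Icc (max (n₂ - m₃) (m₁ - n₃)) (min m₁ (min n₂ (m₁ + m₂ - n₃))) where
  toFun t := ⟨t.1.1, by obtain ⟨⟨x, y, a, b, u, v⟩, h⟩ := t; simp only [Set.mem_Icc]; omega⟩
  invFun x := ⟨(x, m₁ + m₂ - (n₃ + x), n₃ + x - m₁, n₂ - x, m₃ + x - n₂, m₁ - x), by
    obtain ⟨hlo, hhi⟩ := x.2
    dsimp only
    omega⟩
  left_inv t := by
    obtain ⟨⟨x, y, a, b, u, v⟩, h⟩ := t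
    ext <;> dsimp only at h ⊢ <;> omega
  right_inv _ := rfl

theorem card_eq (hs : m₁ + m₂ + m₃ = n₁ + n₂ + n₃) (h₃ : n₃ ≤ m₁ + m₂) :
    Nat.card (AdmissibleTuple_s10 m₁ n₁ m₂ n₂ m₃ n₃) =
      min m₁ (min n₂ (m₁ + m₂ - n₃)) + 1 - max (n₂ - m₃) (m₁ - n₃) := by
  rw [Nat.card_congr (equivIcc hs h₃), Nat.card_coe_set_eq, Set.ncard_Icc_nat]

variable {s p₁ p₂ p₃ : ℕ}

theorem lower_le_upper (hm : m₁ + m₂ + m₃ = s) (hn : n₁ + n₂ + n₃ = s)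
    (hp₁ : m₁ + n₁ + p₁ = s) (hp₂ : m₂ + n₂ + p₂ = s) :
    max (n₂ - m₃) (m₁ - n₃) ≤ min m₁ (min n₂ (m₁ + m₂ - n₃)) := by
  omega

theorem upper_sub_lower_eq_min (hm : m₁ + m₂ + m₃ = s) (hn : n₁ + n₂ + n₃ = s)
    (hp₁ : m₁ + n₁ + p₁ = s) (hp₂ : m₂ + n₂ + p₂ = s) (hp₃ : m₃ + n₃ + p₃ = s) :
    min m₁ (min n₂ (m₁ + m₂ - n₃)) - max (n₂ - m₃) (m₁ - n₃) =
      min m₁ (min m₂ (min m₃ (min n₁ (min n₂ (min n₃ (min p₁ (min p₂ p₃))))))) := by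
  refine eq_of_forall_le_iff fun k => ?_
  rw [Nat.le_sub_iff_add_le (lower_le_upper hm hn hp₁ hp₂)]
  simp only [le_min_iff, add_max, max_le_iff]
  omega

end AdmissibleTuple_s10

theorem admissible_tuple_count
    (m₁ m₂ m₃ n₁ n₂ n₃ s : ℕ)
    (hm : m₁ + m₂ + m₃ = s) (hn : n₁ + n₂ + n₃ = s)
    (p₁ p₂ p₃ : ℕ)
    (hp₁ : m₁ + n₁ + p₁ = s) (hp₂ : m₂ + n₂ + p₂ = s) (hp₃ : m₃ + n₃ + p₃ = s) :
    Nat.card {t : ℕ × ℕ × ℕ × ℕ × ℕ × ℕ //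
        t.1 + t.2.2.2.2.2 = m₁ ∧ t.2.1 + t.2.2.2.2.1 = n₁ ∧
        t.2.2.1 + t.2.1 = m₂ ∧ t.1 + t.2.2.2.1 = n₂ ∧
        t.2.2.2.1 + t.2.2.2.2.1 = m₃ ∧ t.2.2.1 + t.2.2.2.2.2 = n₃} =
      min m₁ (min m₂ (min m₃ (min n₁ (min n₂ (min n₃ (min p₁ (min p₂ p₃))))))) + 1 := by
  rw [AdmissibleTuple_s10.card_eq (hm.trans hn.symm) (by omega),
    Nat.sub_add_comm (AdmissibleTuple_s10.lower_le_upper hm hn hp₁ hp₂),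
    AdmissibleTuple_s10.upper_sub_lower_eq_min hm hn hp₁ hp₂ hp₃]
end
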